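/- arXiv:1802.08620 — 5 statements merged into one kernel-verified Lean document; each statement's English description precedes it below -/
import Mathlib

section
/- Let $G_1$ and $G_2$ be groups normally generated by elements $g_1$ and $g_2$ respectively, $H$ a group, and $\phi_i : H \to G_i$ homomorphisms. If $g_1$ lies in the image of $\phi_1$, then the pushout (amalgamated free product) $G_1 *_H G_2$ is normally generated by the image of $g_2$ under the canonical map $G_2 \to G_1 *_H G_2$. -/
/-- If `G 0` and `G 1` are normally generated by `g₁` and `g₂` respectively, and `g₁` lies in
the image of `φ 0 : H →* G 0`, then the pushout `G 0 *_H G 1` is normally generated by the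
image of `g₂` under the canonical map `G 1 →* G 0 *_H G 1`. -/
theorem pushout_normally_generated
    (G : Fin 2 → Type*) [∀ i, Group (G i)] (H : Type*) [Group H]
    (φ : ∀ i, H →* G i) (g₁ : G 0) (g₂ : G 1)
    (hg₁ : Subgroup.normalClosure {g₁} = ⊤)
    (hg₂ : Subgroup.normalClosure {g₂} = ⊤)
    (himg : g₁ ∈ (φ 0).range) :
    Subgroup.normalClosure {Monoid.PushoutI.of (φ := φ) 1 g₂} = ⊤ := by
  set N := Subgroup.normalClosure {Monoid.PushoutI.of (φ := φ) 1 g₂} with hN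
  have hNnormal : N.Normal := Subgroup.normalClosure_normal
  -- every element of G 1 maps into N
  have h1 : ∀ x : G 1, Monoid.PushoutI.of (φ := φ) 1 x ∈ N := by
    intro x
    have hle : Subgroup.normalClosure {g₂} ≤ N.comap (Monoid.PushoutI.of (φ := φ) 1) := by
      apply Subgroup.normalClosure_le_normal
      · simpa using Subgroup.subset_normalClosure (Set.mem_singleton _)
    have := hle (hg₂ ▸ Subgroup.mem_top x)
    simpa using this
  -- base maps into N
  have hbase : ∀ h : H, Monoid.PushoutI.base φ h ∈ N := by
    intro h
    rw [← Monoid.PushoutI.of_apply_eq_base (φ := φ) 1]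
    exact h1 _
  -- of 0 g₁ ∈ N
  obtain ⟨h, hh⟩ := himg
  have hg1N : Monoid.PushoutI.of (φ := φ) 0 g₁ ∈ N := by
    rw [← hh, Monoid.PushoutI.of_apply_eq_base (φ := φ) 0]
    exact hbase h
  have h0 : ∀ x : G 0, Monoid.PushoutI.of (φ := φ) 0 x ∈ N := by
    intro x
    have hle : Subgroup.normalClosure {g₁} ≤ N.comap (Monoid.PushoutI.of (φ := φ) 0) := by
      apply Subgroup.normalClosure_le_normal
      · simpa using hg1N
    have := hle (hg₁ ▸ Subgroup.mem_top x)
    simpa using this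
  rw [eq_top_iff]
  intro x _
  induction x using Monoid.PushoutI.induction_on with
  | of i x =>
      fin_cases i
      · exact h0 x
      · exact h1 x
  | mul x y hx hy => exact mul_mem (hx trivial) (hy trivial)
  | base h => exact hbase h
end

section
/- Let $G$ be a group normally generated by a single element and let $H$ be a group with a homomorphism $\phi : H \to G$ whose image contains a normal generator of $G$. Then the weight of any pushout of $G$ with another weight-one group over $H$ is one, where the weight of a group is the minimal number of normal generators. -/
lemma aux_range_le {A B : Type*} [Group A] [Group B] (f : A →* B) (a : A)
    (ha : Subgroup.normalClosure {a} = ⊤) (N : Subgroup B) [N.Normal]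
    (hfa : f a ∈ N) (x : A) : f x ∈ N := by
  haveI : (N.comap f).Normal := Subgroup.Normal.comap inferInstance f
  have h : Subgroup.normalClosure {a} ≤ N.comap f :=
    Subgroup.normalClosure_le_normal (by simpa using hfa)
  have := h (ha ▸ Subgroup.mem_top x)
  simpa using this

/-- If `G 0` is normally generated by a single element `g₁` contained in the image of
`φ 0 : H →* G 0`, then the pushout of `G 0` with any other group `G 1` of weight one over `H`
has weight one, i.e. is normally generated by a single element. -/
theorem pushout_weight_one
    (G : Fin 2 → Type*) [∀ i, Group (G i)] (H : Type*) [Group H]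
    (φ : ∀ i, H →* G i) (g₁ : G 0)
    (hg₁ : Subgroup.normalClosure {g₁} = ⊤)
    (himg : g₁ ∈ (φ 0).range)
    (hG₁ : ∃ g₂ : G 1, Subgroup.normalClosure {g₂} = ⊤) :
    ∃ x : Monoid.PushoutI φ, Subgroup.normalClosure {x} = ⊤ := by
  obtain ⟨g₂, hg₂⟩ := hG₁
  obtain ⟨h, hh⟩ := himg
  refine ⟨Monoid.PushoutI.of (φ := φ) 1 g₂, ?_⟩
  set N := Subgroup.normalClosure {Monoid.PushoutI.of (φ := φ) 1 g₂} with hN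
  haveI : N.Normal := Subgroup.normalClosure_normal
  have h1 : ∀ x : G 1, Monoid.PushoutI.of (φ := φ) 1 x ∈ N :=
    aux_range_le _ g₂ hg₂ N (Subgroup.subset_normalClosure rfl)
  have hbase : ∀ x : H, Monoid.PushoutI.base φ x ∈ N := fun x => by
    rw [← Monoid.PushoutI.of_apply_eq_base (φ := φ) 1 x]; exact h1 _
  have h0g : Monoid.PushoutI.of (φ := φ) 0 g₁ ∈ N := by
    rw [← hh, Monoid.PushoutI.of_apply_eq_base (φ := φ) 0 h]; exact hbase h
  have h0 : ∀ x : G 0, Monoid.PushoutI.of (φ := φ) 0 x ∈ N :=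
    aux_range_le _ g₁ hg₁ N h0g
  rw [eq_top_iff]
  intro x _
  induction x using Monoid.PushoutI.induction_on with
  | of i g =>
    fin_cases i
    · exact h0 g
    · exact h1 g
  | base hh => exact hbase hh
  | mul x y hx hy => exact mul_mem (hx trivial) (hy trivial)
end

section
/- The group presented by generators $x_1, x_2$ and relations $x_1^{16k-2} = x_2^{(8k-1)(8k-3)}$, $x_2^{8k-1} = (x_1 x_2)^2$, $[x_2^{8k-1}, x_1] = 1$, together with the additional relation $x_1 = x_2^{4k-2}$, is the trivial group, for every positive integer $k$. -/
/-!
Write `a, b` for the images of `x₁, x₂` and `n = 4k - 2`. The extra relation gives `a = bⁿ`, so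
`a b = bⁿ⁺¹` and the relation `b^(8k-1) = (a b)²` becomes `b^(2n+3) = b^(2n+2)`, forcing `b = 1`
and then `a = 1`.
-/

theorem PresentedGroup.eq_one_of_forall_of_eq_one {α : Type*} {rels : Set (FreeGroup α)}
    (h : ∀ i : α, (PresentedGroup.of i : PresentedGroup rels) = 1) (x : PresentedGroup rels) :
    x = 1 :=
  Subgroup.mem_bot.mp <| PresentedGroup.generated_by rels ⊥ (fun i => Subgroup.mem_bot.mpr (h i)) x

theorem eq_one_of_zpow_eq_sq_zpow_mul {G : Type*} [Group G] {a b : G} {n : ℤ}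
    (ha : b ^ n = a) (h : b ^ (2 * n + 3) = (a * b) ^ (2 : ℤ)) : b = 1 := by
  have hsucc : b ^ (2 * n + 2 + 1) = b ^ (2 * n + 2) := by
    rw [← ha, ← zpow_add_one, ← zpow_mul] at h
    rw [show 2 * n + 2 + 1 = 2 * n + 3 by ring, h]
    ring_nf
  rwa [zpow_add_one, mul_eq_left] at hsucc

theorem PresentedGroup.eq_one_of_zpow_eq_of_zpow_eq_sq {rels : Set (FreeGroup (Fin 2))} (n : ℤ)
    (ha : FreeGroup.of 1 ^ n * (FreeGroup.of 0)⁻¹ ∈ rels)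
    (hsq : FreeGroup.of 1 ^ (2 * n + 3) * ((FreeGroup.of 0 * FreeGroup.of 1) ^ (2 : ℤ))⁻¹ ∈ rels)
    (x : PresentedGroup rels) : x = 1 := by
  replace ha := mk_eq_mk_of_mul_inv_mem ha
  replace hsq := mk_eq_mk_of_mul_inv_mem hsq
  simp only [map_zpow, map_mul] at ha hsq
  have hb : mk rels (FreeGroup.of 1) = 1 := eq_one_of_zpow_eq_sq_zpow_mul ha hsq
  refine eq_one_of_forall_of_eq_one (Fin.forall_fin_two.mpr ⟨?_, hb⟩) x
  rw [of, ← ha, hb, one_zpow]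

theorem presented_group_trivial_general (k : ℕ) :
    ∀ x : PresentedGroup
      ({ (FreeGroup.of 0) ^ (16 * (k : ℤ) - 2) * ((FreeGroup.of 1) ^ ((8 * (k : ℤ) - 1) * (8 * (k : ℤ) - 3)))⁻¹,
         (FreeGroup.of 1) ^ (8 * (k : ℤ) - 1) * ((FreeGroup.of 0 * FreeGroup.of 1) ^ (2 : ℤ))⁻¹,
         (FreeGroup.of 1) ^ (8 * (k : ℤ) - 1) * FreeGroup.of 0 *
           ((FreeGroup.of 1) ^ (8 * (k : ℤ) - 1))⁻¹ * (FreeGroup.of 0)⁻¹,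
         (FreeGroup.of 1) ^ (4 * (k : ℤ) - 2) * (FreeGroup.of 0)⁻¹ } :
        Set (FreeGroup (Fin 2))), x = 1 := by
  refine PresentedGroup.eq_one_of_zpow_eq_of_zpow_eq_sq (4 * k - 2) (by simp) ?_
  rw [show 2 * (4 * (k : ℤ) - 2) + 3 = 8 * k - 1 by ring]
  simp

/-- The group presented by generators `x₁, x₂` with relations
`x₁^(16k-2) = x₂^((8k-1)(8k-3))`, `x₂^(8k-1) = (x₁x₂)^2`, `[x₂^(8k-1), x₁] = 1`,
together with the additional relation `x₁ = x₂^(4k-2)`, is trivial for every `k ≥ 1`. -/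
theorem presented_group_trivial (k : ℕ) (hk : 1 ≤ k) :
    ∀ x : PresentedGroup
      ({ (FreeGroup.of 0) ^ (16 * (k : ℤ) - 2) * ((FreeGroup.of 1) ^ ((8 * (k : ℤ) - 1) * (8 * (k : ℤ) - 3)))⁻¹,
         (FreeGroup.of 1) ^ (8 * (k : ℤ) - 1) * ((FreeGroup.of 0 * FreeGroup.of 1) ^ (2 : ℤ))⁻¹,
         (FreeGroup.of 1) ^ (8 * (k : ℤ) - 1) * FreeGroup.of 0 *
           ((FreeGroup.of 1) ^ (8 * (k : ℤ) - 1))⁻¹ * (FreeGroup.of 0)⁻¹,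
         (FreeGroup.of 1) ^ (4 * (k : ℤ) - 2) * (FreeGroup.of 0)⁻¹ } :
        Set (FreeGroup (Fin 2))), x = 1 :=
  presented_group_trivial_general k
end

section
/- Let $r$ be a rational number with $0 < r < 1$. Then $-1/r$ admits a negative continued fraction expansion $-1/r = a_1 - \cfrac{1}{a_2 - \cfrac{1}{\ddots - \cfrac{1}{a_n}}}$ in which every coefficient $a_i$ is an integer with $a_i \leq -2$. -/
/-! For `s > 1` put `c = ⌈s⌉ ≥ 2`. Either `s = c`, or `-s = -c - 1/(-t)` with
`t = 1/(c - s) > 1`. Since `c - s ∈ (0, 1)` has the same denominator as `s`, its inverse `t`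
has a strictly smaller denominator, so the expansion of `-s` terminates. -/

/-- The negative continued fraction `[a₁, …, aₙ] = a₁ - 1/[a₂, …, aₙ]`. -/
noncomputable def negCF : ℤ → List ℤ → ℚ
  | a, [] => (a : ℚ)
  | a, b :: l => (a : ℚ) - 1 / negCF b l

theorem Rat.den_inv_lt_den {x : ℚ} (hx0 : 0 < x) (hx1 : x < 1) : x⁻¹.den < x.den := by
  have hnum : x.num < x.den := Rat.num_lt_denom_iff.mpr hx1
  have hpos : 0 < x.num := Rat.num_pos.mpr hx0
  rw [Rat.den_inv_of_ne_zero hx0.ne']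
  omega

theorem negCF_cons (a b : ℤ) (l : List ℤ) : negCF a (b :: l) = a - 1 / negCF b l := rfl

theorem exists_negCF_eq_neg (s : ℚ) (hs : 1 < s) :
    ∃ (a : ℤ) (l : List ℤ), (∀ x ∈ a :: l, x ≤ -2) ∧ negCF a l = -s := by
  induction hd : s.den using Nat.strong_induction_on generalizing s with
  | _ d ih =>
  have hc : 2 ≤ ⌈s⌉ := by
    have : (1 : ℤ) < ⌈s⌉ := Int.lt_ceil.mpr (mod_cast hs)
    omega
  rcases (Int.le_ceil s).eq_or_lt with hint | hfrac
  · exact ⟨-⌈s⌉, [], by simpa using hc, by rw [negCF, Int.cast_neg, ← hint]⟩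
  · set x : ℚ := ⌈s⌉ - s with hx
    have hx0 : 0 < x := sub_pos.mpr hfrac
    have hx1 : x < 1 := by linarith [Int.ceil_lt_add_one s]
    have hden : x⁻¹.den < d := hd ▸ Rat.intCast_sub_den ⌈s⌉ s ▸ Rat.den_inv_lt_den hx0 hx1
    obtain ⟨a, l, hle, heq⟩ := ih _ hden x⁻¹ (one_lt_inv₀ hx0 |>.mpr hx1) rfl
    refine ⟨-⌈s⌉, a :: l, ?_, ?_⟩
    · rintro y (_ | ⟨_, hy⟩)
      · omega
      · exact hle y hy
    · rw [negCF_cons, heq, one_div, inv_neg, inv_inv, hx]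
      push_cast
      ring

/-- Every rational `r` with `0 < r < 1` has `-1/r = [a₁, …, aₙ]` as a negative continued
fraction with all coefficients integers `aᵢ ≤ -2`. -/
theorem neg_continued_fraction_exists (r : ℚ) (h0 : 0 < r) (h1 : r < 1) :
    ∃ (a : ℤ) (l : List ℤ), (∀ x ∈ a :: l, x ≤ -2) ∧ negCF a l = -1 / r := by
  rw [neg_div]
  exact exists_negCF_eq_neg _ (one_lt_one_div h0 h1)
end

section
/- Let $\Gamma$ be a star-shaped tree with central vertex weighted $e - \sum_{i=1}^n \lfloor r_i \rfloor$ (an integer) and $n$ legs, where the $i$-th leg has vertices weighted $a_{i1}, \ldots, a_{ik_i}$ with all $a_{ij} \leq -2$ obtained from the negative continued fraction expansion of $-1/r_i$ for $r_i \in (0,1) \cap \mathbb{Q}$. If the associated symmetric bilinear form (intersection form of the plumbing) has determinant zero, then it is negative semi-definite. -/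
open Finset

-- `[w 0, …, w (m - 1)]`, with the empty fraction `0`: since `1 / 0 = 0` in `ℚ`, the recursion
-- yields `negCFPrefix w 1 = w 0`.
noncomputable def negCFPrefix (w : ℕ → ℤ) : ℕ → ℚ
  | 0 => 0
  | m + 1 => w 0 - 1 / negCFPrefix (fun j => w (j + 1)) m

theorem negCF_ofFn_eq_negCFPrefix (f : ℕ → ℤ) (m : ℕ) :
    negCF (f 0) (List.ofFn fun t : Fin m => f (t + 1)) = negCFPrefix f (m + 1) := by
  induction m generalizing f with
  | zero => simp [negCF, negCFPrefix]
  | succ m ih =>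
    rw [List.ofFn_succ, negCF, negCFPrefix]
    simpa using congrArg (fun c => (f 0 : ℚ) - 1 / c) (ih fun j => f (j + 1))

theorem negCFPrefix_lt_neg_one {w : ℕ → ℤ} {m : ℕ} (hm : 0 < m) (hw : ∀ j < m, w j ≤ -2) :
    negCFPrefix w m < -1 := by
  induction m generalizing w with
  | zero => omega
  | succ m ih =>
    have hw0 : (w 0 : ℚ) ≤ -2 := by exact_mod_cast hw 0 m.succ_pos
    rcases Nat.eq_zero_or_pos m with rfl | hm
    · simp only [negCFPrefix, div_zero, sub_zero]; linarith
    · have ht := ih hm fun j hj => hw (j + 1) (by omega)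
      have hinv : 0 < 1 / negCFPrefix (fun j => w (j + 1)) m + 1 := by
        rw [div_add_one (by linarith)]; exact div_pos_of_neg_of_neg (by linarith) (by linarith)
      rw [negCFPrefix]; linarith

theorem mul_sq_add_two_mul_mul_le {c : ℚ} (hc : c < 0) (x y : ℚ) :
    c * y ^ 2 + 2 * x * y ≤ -x ^ 2 / c := by
  rw [le_div_iff_of_neg hc]; nlinarith [sq_nonneg (c * y + x)]

-- A path with weights `w 0, …, w (m - 1)` carrying the values `u 1, …, u m`, attached to an outside
-- vertex with value `u 0`: `pathForm` is its quadratic form plus the edge term `2 u 0 u 1`, and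
-- `pathRow w u j` is the row of its vertex `j` applied to `u`.
def pathForm (w : ℕ → ℤ) (u : ℕ → ℚ) (m : ℕ) : ℚ :=
  ∑ j ∈ range m, (w j * u (j + 1) ^ 2 + 2 * u j * u (j + 1))

def pathRow (w : ℕ → ℤ) (u : ℕ → ℚ) (j : ℕ) : ℚ := u j + w j * u (j + 1) + u (j + 2)

theorem pathForm_succ (w : ℕ → ℤ) (u : ℕ → ℚ) (m : ℕ) :
    pathForm w u (m + 1) = w 0 * u 1 ^ 2 + 2 * u 0 * u 1
      + pathForm (fun j => w (j + 1)) (fun j => u (j + 1)) m := by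
  rw [pathForm, sum_range_succ', add_comm]; rfl

theorem pathForm_le {w : ℕ → ℤ} {m : ℕ} (hw : ∀ j < m, w j ≤ -2) (u : ℕ → ℚ) :
    pathForm w u m ≤ -u 0 ^ 2 / negCFPrefix w m := by
  induction m generalizing w u with
  | zero => simp [pathForm, negCFPrefix]
  | succ m ih =>
    have ih' := ih (fun j hj => hw (j + 1) (by omega)) fun j => u (j + 1)
    have hc := mul_sq_add_two_mul_mul_le
      (negCFPrefix_lt_neg_one m.succ_pos hw |>.trans neg_one_lt_zero) (u 0) (u 1)
    rw [pathForm_succ]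
    rw [negCFPrefix] at hc ⊢
    linarith [show -u 1 ^ 2 / negCFPrefix (fun j => w (j + 1)) m
      = -(1 / negCFPrefix (fun j => w (j + 1)) m) * u 1 ^ 2 by ring]

theorem mul_add_sum_mul_pathRow_eq_pathForm {m : ℕ} (w : ℕ → ℤ) {u : ℕ → ℚ} (hu : u (m + 1) = 0) :
    u 0 * u 1 + ∑ j ∈ range m, u (j + 1) * pathRow w u j = pathForm w u m := by
  induction m generalizing w u with
  | zero => simp [pathForm, hu]
  | succ m ih =>
    have := ih (fun j => w (j + 1)) (u := fun j => u (j + 1)) hu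
    rw [pathForm_succ, ← this, sum_range_succ']
    simp only [pathRow]
    ring

theorem negCFPrefix_mul_add_eq_zero_of_pathRow {w : ℕ → ℤ} {u : ℕ → ℚ} {m : ℕ} (hm : 0 < m)
    (hw : ∀ j < m, w j ≤ -2) (hrow : ∀ j < m, pathRow w u j = 0) (hu : u (m + 1) = 0) :
    negCFPrefix w m * u 1 + u 0 = 0 := by
  induction m generalizing w u with
  | zero => omega
  | succ m ih =>
    have h0 := hrow 0 m.succ_pos
    simp only [pathRow, zero_add] at h0
    rcases Nat.eq_zero_or_pos m with rfl | hm
    · simp only [negCFPrefix, div_zero, sub_zero]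
      linarith [show u 2 = 0 from hu]
    · have ht := negCFPrefix_lt_neg_one hm fun j hj => hw (j + 1) (by omega)
      have ih' : negCFPrefix (fun j => w (j + 1)) m * u 2 + u 1 = 0 :=
        ih hm (fun j hj => hw (j + 1) (by omega)) (fun j hj => hrow (j + 1) (by omega)) hu
      rw [negCFPrefix]
      have hc : negCFPrefix (fun j => w (j + 1)) m ≠ 0 := by linarith
      have : 1 / negCFPrefix (fun j => w (j + 1)) m * u 1 = -u 2 := by
        field_simp; linarith
      linear_combination h0 - this

theorem eq_zero_of_pathRow_eq_zero {w : ℕ → ℤ} {u : ℕ → ℚ} {m : ℕ}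
    (hw : ∀ j < m, w j ≤ -2) (hrow : ∀ j < m, pathRow w u j = 0) (hu : u (m + 1) = 0)
    (hu0 : u 0 = 0) : ∀ j ≤ m, u j = 0 := by
  induction m generalizing w u with
  | zero => intro j hj; rwa [Nat.le_zero.mp hj]
  | succ m ih =>
    have h1 : u 1 = 0 := by
      have := negCFPrefix_mul_add_eq_zero_of_pathRow m.succ_pos hw hrow hu
      rw [hu0, add_zero, mul_eq_zero] at this
      exact this.resolve_left ((negCFPrefix_lt_neg_one m.succ_pos hw).trans neg_one_lt_zero).ne
    intro j hj
    rcases j with _ | j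
    · exact hu0
    · exact ih (u := fun j => u (j + 1)) (fun j hj => hw (j + 1) (by omega))
        (fun j hj => hrow (j + 1) (by omega)) hu h1 j (by omega)

section StarPlumbing

open Matrix

variable {n : ℕ} {k : Fin n → ℕ}

structure IsStarPlumbing (a : (i : Fin n) → Fin (k i) → ℤ)
    (Q : Matrix (Option ((i : Fin n) × Fin (k i))) (Option ((i : Fin n) × Fin (k i))) ℚ) :
    Prop where
  leg_diag : ∀ i j, Q (some ⟨i, j⟩) (some ⟨i, j⟩) = a i j
  center_leg : ∀ i (j : Fin (k i)), Q none (some ⟨i, j⟩) = if (j : ℕ) = 0 then 1 else 0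
  leg_center : ∀ i (j : Fin (k i)), Q (some ⟨i, j⟩) none = if (j : ℕ) = 0 then 1 else 0
  leg_leg : ∀ i (j : Fin (k i)) i' (j' : Fin (k i')),
    (⟨i, j⟩ : (i : Fin n) × Fin (k i)) ≠ ⟨i', j'⟩ →
    Q (some ⟨i, j⟩) (some ⟨i', j'⟩) =
      if i = i' ∧ ((j : ℕ) + 1 = (j' : ℕ) ∨ (j' : ℕ) + 1 = (j : ℕ)) then 1 else 0

def legWeight (a : (i : Fin n) → Fin (k i) → ℤ) (i : Fin n) (j : ℕ) : ℤ :=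
  if h : j < k i then a i ⟨j, h⟩ else 0

-- The `i`-th leg read outwards from the centre: index `0` is the central vertex, index `j + 1`
-- the `j`-th vertex of the leg, and `0` past its end.
def legSeq (z : Option ((i : Fin n) × Fin (k i)) → ℚ) (i : Fin n) : ℕ → ℚ
  | 0 => z none
  | j + 1 => if h : j < k i then z (some ⟨i, ⟨j, h⟩⟩) else 0

variable {a : (i : Fin n) → Fin (k i) → ℤ}
  {Q : Matrix (Option ((i : Fin n) × Fin (k i))) (Option ((i : Fin n) × Fin (k i))) ℚ}
  (z : Option ((i : Fin n) × Fin (k i)) → ℚ)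

theorem legWeight_fin (i : Fin n) (j : Fin (k i)) : legWeight a i j = a i j := by
  simp [legWeight]

@[simp] theorem legSeq_zero (i : Fin n) : legSeq z i 0 = z none := rfl

theorem legSeq_succ_fin (i : Fin n) (j : Fin (k i)) :
    legSeq z i (j + 1) = z (some ⟨i, j⟩) := by
  simp [legSeq]

theorem legSeq_succ_of_le {i : Fin n} {j : ℕ} (h : k i ≤ j) : legSeq z i (j + 1) = 0 := by
  simp [legSeq, not_lt.mpr h]

theorem sum_fin_eq_sum_range_legSeq (i : Fin n) (f : ℕ → ℚ → ℚ) :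
    ∑ j : Fin (k i), f j (z (some ⟨i, j⟩)) = ∑ j ∈ range (k i), f j (legSeq z i (j + 1)) := by
  simp only [← legSeq_succ_fin z i]
  exact Fin.sum_univ_eq_sum_range (fun j => f j (legSeq z i (j + 1))) (k i)

theorem sum_range_ite_mul_legSeq (i : Fin n) (c : ℕ) (x : ℚ) :
    ∑ j ∈ range (k i), (if j + 1 = c then x else 0) * legSeq z i (j + 1) =
      if c = 0 then 0 else x * legSeq z i c := by
  rcases c with _ | c
  · simp
  · by_cases hc : c < k i
    · simp [ite_mul, hc]
    · simp [ite_mul, hc, legSeq_succ_of_le z (not_lt.mp hc)]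

theorem IsStarPlumbing.apply_leg_leg (hQ : IsStarPlumbing a Q) (i : Fin n) (j j' : Fin (k i)) :
    Q (some ⟨i, j⟩) (some ⟨i, j'⟩) = (if (j' : ℕ) + 1 = j + 1 then (a i j : ℚ) else 0)
      + (if (j' : ℕ) + 1 = j then 1 else 0) + (if (j' : ℕ) + 1 = j + 2 then 1 else 0) := by
  rcases eq_or_ne j' j with rfl | hne
  · simp [hQ.leg_diag]
  · have hne' : (j' : ℕ) ≠ j := Fin.val_ne_of_ne hne
    rw [hQ.leg_leg i j i j' (by simpa using hne.symm)]
    simp only [true_and]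
    split_ifs <;> norm_num <;> omega

theorem IsStarPlumbing.mulVec_none (hQ : IsStarPlumbing a Q) :
    (Q *ᵥ z) none = Q none none * z none + ∑ i, legSeq z i 1 := by
  rw [mulVec, dotProduct, Fintype.sum_option, Fintype.sum_sigma]
  congr 1
  refine sum_congr rfl fun i _ => ?_
  simp only [hQ.center_leg]
  rw [sum_fin_eq_sum_range_legSeq z i fun j y => (if j = 0 then 1 else 0) * y]
  simpa using sum_range_ite_mul_legSeq z i 1 1

theorem IsStarPlumbing.mulVec_some (hQ : IsStarPlumbing a Q) (i : Fin n) (j : Fin (k i)) :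
    (Q *ᵥ z) (some ⟨i, j⟩) = pathRow (legWeight a i) (legSeq z i) j := by
  rw [mulVec, dotProduct, Fintype.sum_option, Fintype.sum_sigma, Fintype.sum_eq_single i]
  · simp only [hQ.leg_center, hQ.apply_leg_leg]
    rw [sum_fin_eq_sum_range_legSeq z i fun j' y => ((if j' + 1 = j + 1 then (a i j : ℚ) else 0)
      + (if j' + 1 = j then 1 else 0) + (if j' + 1 = j + 2 then 1 else 0)) * y]
    simp only [add_mul, sum_add_distrib, sum_range_ite_mul_legSeq, pathRow, legWeight_fin]
    by_cases h : (j : ℕ) = 0 <;> simp [h] <;> ring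
  · intro i' hi'
    refine sum_eq_zero fun j' _ => ?_
    rw [hQ.leg_leg i j i' j' (by simp [Ne.symm hi']), if_neg (by tauto), zero_mul]

theorem IsStarPlumbing.dotProduct_mulVec (hQ : IsStarPlumbing a Q) :
    z ⬝ᵥ (Q *ᵥ z) =
      Q none none * z none ^ 2 + ∑ i, pathForm (legWeight a i) (legSeq z i) (k i) := by
  rw [dotProduct, Fintype.sum_option, Fintype.sum_sigma, hQ.mulVec_none]
  simp only [hQ.mulVec_some]
  have hleg : ∀ i, ∑ j : Fin (k i), z (some ⟨i, j⟩) * pathRow (legWeight a i) (legSeq z i) j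
      = pathForm (legWeight a i) (legSeq z i) (k i) - z none * legSeq z i 1 := fun i => by
    rw [sum_fin_eq_sum_range_legSeq z i fun j y => y * pathRow (legWeight a i) (legSeq z i) j,
      ← mul_add_sum_mul_pathRow_eq_pathForm _ (legSeq_succ_of_le z le_rfl), legSeq_zero]
    ring
  rw [sum_congr rfl fun i _ => hleg i, sum_sub_distrib, ← mul_sum]
  ring

theorem legWeight_le (ha : ∀ i j, a i j ≤ -2) (i : Fin n) : ∀ j < k i, legWeight a i j ≤ -2 :=
  fun j hj => by simpa [legWeight, hj] using ha i ⟨j, hj⟩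

theorem negCF_leg_eq_negCFPrefix (i : Fin n) (hk : 0 < k i) :
    negCF (a i ⟨0, hk⟩) (List.ofFn fun t : Fin (k i - 1) => a i ⟨(t : ℕ) + 1, by omega⟩) =
      negCFPrefix (legWeight a i) (k i) := by
  have h := negCF_ofFn_eq_negCFPrefix (legWeight a i) (k i - 1)
  rw [Nat.sub_add_cancel hk] at h
  rw [← h]
  congr 2
  · simp [legWeight, hk]
  · ext t; simp [legWeight, Nat.add_one_le_iff.mp (Nat.add_lt_of_lt_sub t.isLt)]

variable {z}

theorem IsStarPlumbing.pathRow_eq_zero (hQ : IsStarPlumbing a Q) (hz : Q *ᵥ z = 0) (i : Fin n)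
    {j : ℕ} (hj : j < k i) : pathRow (legWeight a i) (legSeq z i) j = 0 := by
  simpa [hQ.mulVec_some] using congrFun hz (some ⟨i, ⟨j, hj⟩⟩)

theorem IsStarPlumbing.legSeq_one_eq (hQ : IsStarPlumbing a Q) (ha : ∀ i j, a i j ≤ -2)
    {i : Fin n} (hk : 0 < k i) {r : ℚ} (hr : r ≠ 0)
    (hc : negCFPrefix (legWeight a i) (k i) = -1 / r) (hz : Q *ᵥ z = 0) :
    legSeq z i 1 = r * z none := by
  have h := negCFPrefix_mul_add_eq_zero_of_pathRow hk (legWeight_le ha i)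
    (fun j hj => hQ.pathRow_eq_zero hz i hj) (legSeq_succ_of_le z le_rfl)
  rw [hc, legSeq_zero] at h
  field_simp at h
  linarith

theorem IsStarPlumbing.eq_zero_of_mulVec_eq_zero (hQ : IsStarPlumbing a Q)
    (ha : ∀ i j, a i j ≤ -2) (hz : Q *ᵥ z = 0) (h0 : z none = 0) : z = 0 := by
  funext u
  rcases u with _ | ⟨i, j⟩
  · exact h0
  · rw [← legSeq_succ_fin z i j]
    exact eq_zero_of_pathRow_eq_zero (legWeight_le ha i) (fun j hj => hQ.pathRow_eq_zero hz i hj)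
      (legSeq_succ_of_le z le_rfl) h0 _ j.isLt

theorem IsStarPlumbing.add_sum_eq_zero_of_det_eq_zero (hQ : IsStarPlumbing a Q)
    (ha : ∀ i j, a i j ≤ -2) (hk : ∀ i, 0 < k i) {r : Fin n → ℚ} (hr : ∀ i, r i ≠ 0)
    (hc : ∀ i, negCFPrefix (legWeight a i) (k i) = -1 / r i) (hdet : Q.det = 0) :
    Q none none + ∑ i, r i = 0 := by
  by_contra hs
  obtain ⟨v, hv0, hv⟩ := Matrix.exists_mulVec_eq_zero_iff.mpr hdet
  have hcenter := congrFun hv none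
  rw [hQ.mulVec_none, sum_congr rfl fun i _ => hQ.legSeq_one_eq ha (hk i) (hr i) (hc i) hv,
    ← sum_mul, ← add_mul, Pi.zero_apply, mul_eq_zero] at hcenter
  exact hv0 (hQ.eq_zero_of_mulVec_eq_zero ha hv (hcenter.resolve_left hs))

end StarPlumbing

/-- Intersection form of a star-shaped plumbing tree: central vertex of weight
`e - ∑ ⌊rᵢ⌋`, and `n` legs, the `i`-th leg having `k i` vertices with weights
`a i 0, …, a i (k i - 1)`, all `≤ -2`, coming from the negative continued fraction
expansion of `-1/rᵢ` with `rᵢ ∈ (0,1) ∩ ℚ`.  If the form has determinant zero then it is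
negative semi-definite. -/
theorem star_shaped_plumbing_negSemidef
    (n : ℕ) (k : Fin n → ℕ) (hk : ∀ i, 1 ≤ k i)
    (a : (i : Fin n) → Fin (k i) → ℤ) (ha : ∀ i j, a i j ≤ -2)
    (r : Fin n → ℚ) (hr : ∀ i, 0 < r i ∧ r i < 1)
    -- the weights along the `i`-th leg form the negative continued fraction of `-1/rᵢ`
    (hcf : ∀ i, negCF (a i ⟨0, hk i⟩)
        (List.ofFn fun t : Fin (k i - 1) => a i ⟨(t : ℕ) + 1, by omega⟩) = -1 / r i)
    (e : ℤ)
    (Q : Matrix (Option ((i : Fin n) × Fin (k i))) (Option ((i : Fin n) × Fin (k i))) ℚ)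
    -- diagonal entries: the vertex weights
    (hQcc : Q none none = (e : ℚ) - ∑ i, ⌊r i⌋)
    (hQdiag : ∀ i j, Q (some ⟨i, j⟩) (some ⟨i, j⟩) = a i j)
    -- the central vertex is adjacent exactly to the first vertex of each leg
    (hQc : ∀ i (j : Fin (k i)),
      Q none (some ⟨i, j⟩) = if (j : ℕ) = 0 then 1 else 0)
    (hQc' : ∀ i (j : Fin (k i)),
      Q (some ⟨i, j⟩) none = if (j : ℕ) = 0 then 1 else 0)
    -- consecutive vertices within a leg are adjacent; no other adjacencies
    (hQlegs : ∀ i (j : Fin (k i)) i' (j' : Fin (k i')),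
      (⟨i, j⟩ : (i : Fin n) × Fin (k i)) ≠ ⟨i', j'⟩ →
      Q (some ⟨i, j⟩) (some ⟨i', j'⟩) =
        if i = i' ∧ ((j : ℕ) + 1 = (j' : ℕ) ∨ (j' : ℕ) + 1 = (j : ℕ)) then 1 else 0)
    (hdet : Q.det = 0) :
    ∀ x : Option ((i : Fin n) × Fin (k i)) → ℚ, dotProduct x (Q.mulVec x) ≤ 0 := by
  have hQ : IsStarPlumbing a Q := ⟨hQdiag, hQc, hQc', hQlegs⟩
  have hc i : negCFPrefix (legWeight a i) (k i) = -1 / r i := by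
    rw [← negCF_leg_eq_negCFPrefix i (hk i), hcf]
  have hQe : Q none none = e := by
    simp [hQcc, Int.floor_eq_zero_iff.mpr ⟨(hr _).1.le, (hr _).2⟩]
  have hsum : (e : ℚ) + ∑ i, r i = 0 := hQe ▸
    hQ.add_sum_eq_zero_of_det_eq_zero ha hk (fun i => (hr i).1.ne') hc hdet
  intro x
  calc dotProduct x (Q.mulVec x)
      = e * x none ^ 2 + ∑ i, pathForm (legWeight a i) (legSeq x i) (k i) := by
        rw [hQ.dotProduct_mulVec, hQe]
    _ ≤ e * x none ^ 2 + ∑ i, r i * x none ^ 2 := by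
        gcongr with i
        have hle := pathForm_le (legWeight_le ha i) (legSeq x i)
        simpa [hc, div_div_eq_mul_div, mul_comm] using hle
    _ = 0 := by rw [← sum_mul, ← add_mul, hsum, zero_mul]
end
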